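/- Let f : E → ℝ be convex, differentiable with L-Lipschitz gradient, admitting a minimizer x*. For x₀ ∈ E define xₙ₊₁ = xₙ - (1/L)∇f(xₙ). Then for all n ≥ 1, f(xₙ) - f(x*) ≤ (L/(2n))‖x₀ - x*‖². -/

import Mathlib

/-!
The `L`-Lipschitz gradient gives the descent lemma
`f y ≤ f x + ⟪∇f x, y - x⟫ + L/2 ‖y - x‖²`, so a step of length `1/L` decreases `f` by at least
`‖∇f xₖ‖² / (2L)`. Adding the first-order convexity bound `f xₖ - f x* ≤ ⟪∇f xₖ, xₖ - x*⟫` turns this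
into `f xₖ₊₁ - f x* ≤ L/2 (‖xₖ - x*‖² - ‖xₖ₊₁ - x*‖²)`, which telescopes. As `f xₖ` is
nonincreasing, `n (f xₙ - f x*)` is at most the telescoped sum `L/2 ‖x₀ - x*‖²`.
-/

open scoped RealInnerProductSpace

section Gradient

variable {E : Type*} [NormedAddCommGroup E] [InnerProductSpace ℝ E] [CompleteSpace E]
  {f : E → ℝ}

theorem HasGradientAt.hasDerivAt_comp_add_smul {g a d : E} {t : ℝ}
    (hf : HasGradientAt f g (a + t • d)) :
    HasDerivAt (fun s : ℝ => f (a + s • d)) ⟪g, d⟫ t := by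
  have hline : HasDerivAt (fun s : ℝ => a + s • d) d t := by
    simpa using ((hasDerivAt_id t).smul_const d).const_add a
  exact hf.hasFDerivAt.comp_hasDerivAt t hline

theorem ConvexOn.add_inner_le_of_hasGradientAt (hconv : ConvexOn ℝ Set.univ f) {g a : E}
    (hf : HasGradientAt f g a) (b : E) : f a + ⟪g, b - a⟫ ≤ f b := by
  have hline : ConvexOn ℝ Set.univ fun t : ℝ => f (a + t • (b - a)) := by
    simpa [Function.comp_def, AffineMap.lineMap_apply_module', add_comm]
      using hconv.comp_affineMap (AffineMap.lineMap a b)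
  have hderiv : HasDerivAt (fun t : ℝ => f (a + t • (b - a))) ⟪g, b - a⟫ 0 :=
    HasGradientAt.hasDerivAt_comp_add_smul (by simpa using hf)
  have hslope := hline.le_slope_of_hasDerivAt (Set.mem_univ 0) (Set.mem_univ 1) one_pos hderiv
  simp only [slope_def_field, zero_smul, add_zero, one_smul, add_sub_cancel, sub_zero,
    div_one] at hslope
  linarith

variable {f' : E → E} {L : ℝ}

theorem le_add_inner_add_sq_of_lipschitz_gradient (hf : ∀ x, HasGradientAt f (f' x) x)
    (hlip : ∀ x y, ‖f' x - f' y‖ ≤ L * ‖x - y‖) (a b : E) :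
    f b ≤ f a + ⟪f' a, b - a⟫ + L / 2 * ‖b - a‖ ^ 2 := by
  set d := b - a
  set φ : ℝ → ℝ := fun t => f (a + t • d) - t * ⟪f' a, d⟫ - L / 2 * t ^ 2 * ‖d‖ ^ 2
  have hφ : ∀ t, HasDerivAt φ (⟪f' (a + t • d), d⟫ - ⟪f' a, d⟫ - L * t * ‖d‖ ^ 2) t := by
    intro t
    have hline : HasDerivAt (fun s : ℝ => f (a + s • d)) ⟪f' (a + t • d), d⟫ t :=
      (hf _).hasDerivAt_comp_add_smul
    have hsq := ((hasDerivAt_pow 2 t).const_mul (L / 2)).mul_const (‖d‖ ^ 2)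
    exact ((hline.sub ((hasDerivAt_id t).mul_const ⟪f' a, d⟫)).sub hsq).congr_deriv (by
      simp only [Nat.cast_ofNat]
      ring)
  have hφ_nonpos : ∀ t ∈ interior (Set.Icc (0 : ℝ) 1),
      ⟪f' (a + t • d), d⟫ - ⟪f' a, d⟫ - L * t * ‖d‖ ^ 2 ≤ 0 := by
    intro t ht
    rw [interior_Icc] at ht
    calc ⟪f' (a + t • d), d⟫ - ⟪f' a, d⟫ - L * t * ‖d‖ ^ 2
        = ⟪f' (a + t • d) - f' a, d⟫ - L * t * ‖d‖ ^ 2 := by rw [inner_sub_left]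
      _ ≤ L * ‖(a + t • d) - a‖ * ‖d‖ - L * t * ‖d‖ ^ 2 := by
          gcongr
          exact (real_inner_le_norm _ _).trans (by gcongr; exact hlip _ _)
      _ = 0 := by
          rw [add_sub_cancel_left, norm_smul, Real.norm_of_nonneg ht.1.le]
          ring
  have hanti : AntitoneOn φ (Set.Icc 0 1) :=
    antitoneOn_of_hasDerivWithinAt_nonpos (convex_Icc 0 1)
      (fun t _ => (hφ t).continuousAt.continuousWithinAt)
      (fun t _ => (hφ t).hasDerivWithinAt) hφ_nonpos
  have h01 := hanti (by simp) (by simp) zero_le_one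
  simp only [φ, d, zero_smul, add_zero, one_smul, add_sub_cancel] at h01
  linarith

theorem gradient_step_le (hf : ∀ x, HasGradientAt f (f' x) x)
    (hlip : ∀ x y, ‖f' x - f' y‖ ≤ L * ‖x - y‖) (hL : L ≠ 0) (a : E) :
    f (a - (1 / L) • f' a) ≤ f a - 1 / (2 * L) * ‖f' a‖ ^ 2 := by
  have h := le_add_inner_add_sq_of_lipschitz_gradient hf hlip a (a - (1 / L) • f' a)
  rw [sub_sub_cancel_left, inner_neg_right, real_inner_smul_right, real_inner_self_eq_norm_sq,
    norm_neg, norm_smul, Real.norm_eq_abs, mul_pow, sq_abs] at h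
  convert h using 1
  field_simp
  ring

theorem ConvexOn.gradient_step_sub_le (hconv : ConvexOn ℝ Set.univ f)
    (hf : ∀ x, HasGradientAt f (f' x) x) (hlip : ∀ x y, ‖f' x - f' y‖ ≤ L * ‖x - y‖)
    (hL : L ≠ 0) (a z : E) :
    f (a - (1 / L) • f' a) - f z ≤
      L / 2 * ‖a - z‖ ^ 2 - L / 2 * ‖a - (1 / L) • f' a - z‖ ^ 2 := by
  have hdecrease := gradient_step_le hf hlip hL a
  have hconvex := hconv.add_inner_le_of_hasGradientAt (hf a) z
  have hdist : ‖a - (1 / L) • f' a - z‖ ^ 2 =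
      ‖a - z‖ ^ 2 - 2 / L * ⟪f' a, a - z⟫ + (1 / L) ^ 2 * ‖f' a‖ ^ 2 := by
    rw [sub_right_comm, norm_sub_sq_real, real_inner_smul_right, real_inner_comm, norm_smul,
      Real.norm_eq_abs, mul_pow, sq_abs]
    ring
  rw [← neg_sub a z, inner_neg_right] at hconvex
  rw [hdist]
  have : L / 2 * (2 / L * ⟪f' a, a - z⟫ - (1 / L) ^ 2 * ‖f' a‖ ^ 2) =
      ⟪f' a, a - z⟫ - 1 / (2 * L) * ‖f' a‖ ^ 2 := by
    field_simp
  linarith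

end Gradient

theorem nat_mul_le_of_antitone_of_le_sub {u d : ℕ → ℝ} (hu : Antitone u)
    (hd : ∀ k, u (k + 1) ≤ d k - d (k + 1)) {n : ℕ} (hn : 0 ≤ d n) : n * u n ≤ d 0 :=
  calc n * u n = ∑ _k ∈ Finset.range n, u n := by simp
    _ ≤ ∑ k ∈ Finset.range n, u (k + 1) :=
        Finset.sum_le_sum fun k hk => hu (Finset.mem_range.mp hk)
    _ ≤ ∑ k ∈ Finset.range n, (d k - d (k + 1)) := Finset.sum_le_sum fun k _ => hd k
    _ = d 0 - d n := Finset.sum_range_sub' d n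
    _ ≤ d 0 := by linarith

theorem stmt_7_general {E : Type*} [NormedAddCommGroup E] [InnerProductSpace ℝ E]
    [FiniteDimensional ℝ E]
    (f : E → ℝ) (f' : E → E) (L : ℝ) (hL : 0 < L)
    (hconv : ConvexOn ℝ Set.univ f)
    (hdiff : ∀ x, HasGradientAt f (f' x) x)
    (hlip : ∀ x y, ‖f' x - f' y‖ ≤ L * ‖x - y‖)
    (xstar : E)
    (x : ℕ → E)
    (hiter : ∀ n, x (n + 1) = x n - (1 / L) • f' (x n)) :
    ∀ n : ℕ, 1 ≤ n → f (x n) - f xstar ≤ L / (2 * n) * ‖x 0 - xstar‖ ^ 2 := by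
  intro n hn
  have hanti : Antitone fun k => f (x k) - f xstar := antitone_nat_of_succ_le fun k => by
    have hdecrease := gradient_step_le hdiff hlip hL.ne' (x k)
    rw [hiter]
    linarith [show 0 ≤ 1 / (2 * L) * ‖f' (x k)‖ ^ 2 by positivity]
  have hstep (k : ℕ) : f (x (k + 1)) - f xstar ≤
      L / 2 * ‖x k - xstar‖ ^ 2 - L / 2 * ‖x (k + 1) - xstar‖ ^ 2 := by
    rw [hiter]
    exact hconv.gradient_step_sub_le hdiff hlip hL.ne' (x k) xstar
  have hbound := nat_mul_le_of_antitone_of_le_sub (d := fun k => L / 2 * ‖x k - xstar‖ ^ 2)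
    hanti hstep (n := n) (by positivity)
  rw [div_mul_eq_mul_div, le_div_iff₀ (by positivity)]
  linarith

/-- `O(1/n)` rate of gradient descent with step `1/L` for a convex `L`-smooth function. -/
theorem stmt_7 {E : Type*} [NormedAddCommGroup E] [InnerProductSpace ℝ E]
    [FiniteDimensional ℝ E]
    (f : E → ℝ) (f' : E → E) (L : ℝ) (hL : 0 < L)
    (hconv : ConvexOn ℝ Set.univ f)
    (hdiff : ∀ x, HasGradientAt f (f' x) x)
    (hlip : ∀ x y, ‖f' x - f' y‖ ≤ L * ‖x - y‖)
    (xstar : E) (hmin : ∀ x, f xstar ≤ f x)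
    (x : ℕ → E)
    (hiter : ∀ n, x (n + 1) = x n - (1 / L) • f' (x n)) :
    ∀ n : ℕ, 1 ≤ n → f (x n) - f xstar ≤ L / (2 * n) * ‖x 0 - xstar‖ ^ 2 :=
  stmt_7_general f f' L hL hconv hdiff hlip xstar x hiter
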